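/- arXiv:1606.05336 — 3 statements merged into one kernel-verified Lean document; each statement's English description precedes it below -/
import Mathlib

section
/- Let H_1, ..., H_k be affine hyperplanes in ℝ^m, where each H_i = {x ∈ ℝ^m : α_i · x = β_i} with α_i ∈ ℝ^m nonzero and β_i ∈ ℝ. Then the number of connected components of ℝ^m \ (H_1 ∪ ... ∪ H_k) is at most ∑_{i=0}^{m} C(k, i), where C(k,i) denotes the binomial coefficient. -/
/-!
A point off the hyperplanes has a sign vector recording on which side of each hyperplane it lies.
The points with a given sign vector form an intersection of open half-spaces, a convex and hence
connected set, so there are at most as many regions as realized sign vectors. These are counted by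
deletion–restriction on one hyperplane `H`: a realized sign vector of the other `k - 1`
hyperplanes extends in at most two ways, and in two ways only if it is realized on `H` itself
(on a segment crossing `H`, by convexity), i.e. by an arrangement of `k - 1` hyperplanes in
`H ≅ ℝ^(m-1)`. Pascal's rule `C(k, i) = C(k-1, i) + C(k-1, i-1)` closes the induction.
-/

open Finset Module Set

theorem Nat.card_le_card_range_of_factorsThrough {X Y Z : Type*} {π : X → Y}
    (hπ : Function.Surjective π) (g : X → Z) (hg : π.FactorsThrough g) [Finite (range g)] :
    Nat.card Y ≤ Nat.card (range g) := by
  choose r hr using fun z : range g => z.2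
  refine Nat.card_le_card_of_surjective (fun z => π (r z)) fun y => ?_
  obtain ⟨x, rfl⟩ := hπ y
  exact ⟨⟨g x, x, rfl⟩, hg (hr _)⟩

theorem ConnectedComponents.mk_eq_mk_of_isPreconnected {X : Type*} [TopologicalSpace X]
    {S t : Set X} (ht : IsPreconnected t) (hts : t ⊆ S) {x y : S} (hx : ↑x ∈ t) (hy : ↑y ∈ t) :
    ConnectedComponents.mk x = ConnectedComponents.mk y := by
  have : PreconnectedSpace t := Subtype.preconnectedSpace ht
  have hrange := isPreconnected_range (continuous_inclusion hts)
  exact ConnectedComponents.coe_eq_coe'.2 <|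
    hrange.subset_connectedComponent ⟨⟨y, hy⟩, rfl⟩ ⟨⟨x, hx⟩, rfl⟩

theorem Convex.exists_mem_eq_of_mem_uIcc {E : Type*} [AddCommGroup E] [Module ℝ E] {S : Set E}
    (hS : Convex ℝ S) (φ : E →ᵃ[ℝ] ℝ) {x z : E} (hx : x ∈ S) (hz : z ∈ S) {d : ℝ}
    (hd : d ∈ uIcc (φ x) (φ z)) : ∃ w ∈ S, φ w = d := by
  rw [← segment_eq_uIcc, ← image_segment] at hd
  obtain ⟨w, hw, rfl⟩ := hd
  exact ⟨w, hS.segment_subset hx hz hw, rfl⟩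

theorem Nat.sum_range_choose_succ_eq (k n : ℕ) :
    ∑ i ∈ range (n + 1), (k + 1).choose i =
      ∑ i ∈ range (n + 1), k.choose i + ∑ i ∈ range n, k.choose i := by
  rw [sum_range_succ', sum_range_succ' (fun i => k.choose i)]
  simp only [Nat.choose_succ_succ', sum_add_distrib, Nat.choose_zero_right]
  ring

theorem Set.ncard_le_ncard_cons_add {k : ℕ} (S : Set (Fin (k + 1) → Bool)) :
    S.ncard ≤ {s | Fin.cons false s ∈ S}.ncard + {s | Fin.cons true s ∈ S}.ncard := by
  have hcover : S ⊆ Fin.cons false '' {s | Fin.cons false s ∈ S} ∪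
      Fin.cons true '' {s | Fin.cons true s ∈ S} := by
    intro s hs
    rw [← Fin.cons_self_tail s] at hs ⊢
    generalize s 0 = b at hs
    cases b
    exacts [Or.inl ⟨_, hs, rfl⟩, Or.inr ⟨_, hs, rfl⟩]
  calc S.ncard ≤ _ := ncard_le_ncard hcover
    _ ≤ _ := ncard_union_le _ _
    _ = _ := by
      rw [ncard_image_of_injective _ (Fin.cons_right_injective _),
        ncard_image_of_injective _ (Fin.cons_right_injective _)]

namespace HyperplaneArrangement

variable {E F : Type*} [AddCommGroup E] [Module ℝ E] [AddCommGroup F] [Module ℝ F] {k : ℕ}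

def signedHalfLine (b : Bool) : Set ℝ := bif b then Iio 0 else Ioi 0

theorem convex_signedHalfLine (b : Bool) : Convex ℝ (signedHalfLine b) := by
  cases b
  exacts [convex_Ioi 0, convex_Iio 0]

noncomputable def signVector (f : Fin k → E →ᵃ[ℝ] ℝ) (x : E) : Fin k → Bool :=
  fun i => decide (f i x < 0)

def signCell (f : Fin k → E →ᵃ[ℝ] ℝ) (s : Fin k → Bool) : Set E :=
  ⋂ i, f i ⁻¹' signedHalfLine (s i)

def realizedSignVectors (f : Fin k → E →ᵃ[ℝ] ℝ) : Set (Fin k → Bool) :=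
  {s | (signCell f s).Nonempty}

theorem convex_signCell (f : Fin k → E →ᵃ[ℝ] ℝ) (s : Fin k → Bool) : Convex ℝ (signCell f s) :=
  convex_iInter fun i => (convex_signedHalfLine _).affine_preimage (f i)

theorem signCell_subset (f : Fin k → E →ᵃ[ℝ] ℝ) (s : Fin k → Bool) :
    signCell f s ⊆ {x | ∀ i, f i x ≠ 0} := by
  intro x hx i
  have : f i x ∈ signedHalfLine (s i) := mem_iInter.1 hx i
  generalize s i = b at this
  cases b
  exacts [(this : 0 < f i x).ne', (this : f i x < 0).ne]

theorem mem_signCell_signVector {f : Fin k → E →ᵃ[ℝ] ℝ} {x : E} (hx : ∀ i, f i x ≠ 0) :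
    x ∈ signCell f (signVector f x) := by
  refine mem_iInter.2 fun i => ?_
  rcases (hx i).lt_or_gt with h | h <;> simp [signVector, signedHalfLine, h, h.not_gt]

theorem signCell_comp (f : Fin k → E →ᵃ[ℝ] ℝ) (e : F →ᵃ[ℝ] E) (s : Fin k → Bool) :
    signCell (fun i => (f i).comp e) s = e ⁻¹' signCell f s := by
  ext
  simp [signCell]

theorem mem_signCell_cons {f : Fin (k + 1) → E →ᵃ[ℝ] ℝ} {b : Bool} {s : Fin k → Bool} {x : E} :
    x ∈ signCell f (Fin.cons b s) ↔ f 0 x ∈ signedHalfLine b ∧ x ∈ signCell (Fin.tail f) s := by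
  simp [signCell, Fin.forall_fin_succ, Fin.tail]

theorem exists_mem_signCell_tail_eq_zero {f : Fin (k + 1) → E →ᵃ[ℝ] ℝ} {s : Fin k → Bool}
    (hpos : Fin.cons false s ∈ realizedSignVectors f)
    (hneg : Fin.cons true s ∈ realizedSignVectors f) :
    ∃ w ∈ signCell (Fin.tail f) s, f 0 w = 0 := by
  obtain ⟨x, hx⟩ := hpos
  obtain ⟨z, hz⟩ := hneg
  obtain ⟨hx0, hx⟩ := mem_signCell_cons.1 hx
  obtain ⟨hz0, hz⟩ := mem_signCell_cons.1 hz
  exact (convex_signCell _ s).exists_mem_eq_of_mem_uIcc (f 0) hx hz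
    (mem_uIcc.2 (Or.inr ⟨(hz0 : f 0 _ < 0).le, (hx0 : 0 < f 0 _).le⟩))

theorem exists_hyperplane_restriction [FiniteDimensional ℝ E] {f : Fin (k + 1) → E →ᵃ[ℝ] ℝ}
    (h : {s | Fin.cons false s ∈ realizedSignVectors f ∧
      Fin.cons true s ∈ realizedSignVectors f}.Nonempty) :
    ∃ (K : Submodule ℝ E) (g : Fin k → K →ᵃ[ℝ] ℝ), finrank ℝ K + 1 = finrank ℝ E ∧
      {s | Fin.cons false s ∈ realizedSignVectors f ∧
        Fin.cons true s ∈ realizedSignVectors f} ⊆ realizedSignVectors g := by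
  obtain ⟨s₀, ⟨x, hx⟩, hneg⟩ := h
  obtain ⟨w₀, -, hw₀⟩ := exists_mem_signCell_tail_eq_zero ⟨x, hx⟩ hneg
  have hx₀ : f 0 x ≠ 0 := ((mem_signCell_cons.1 hx).1 : 0 < f 0 x).ne'
  have hlin : (f 0).linear ≠ 0 := fun h0 => hx₀ <| by
    simpa [h0, hw₀] using ((f 0).linearMap_vsub x w₀).symm
  let e : LinearMap.ker (f 0).linear →ᵃ[ℝ] E :=
    (LinearMap.ker (f 0).linear).subtype.toAffineMap + AffineMap.const ℝ _ w₀
  refine ⟨_, fun i => (Fin.tail f i).comp e, Module.Dual.finrank_ker_add_one_of_ne_zero hlin, ?_⟩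
  rintro s ⟨hpos, hneg⟩
  obtain ⟨w, hw, hw0⟩ := exists_mem_signCell_tail_eq_zero hpos hneg
  have hker : w - w₀ ∈ LinearMap.ker (f 0).linear := by
    simpa [hw0, hw₀] using (f 0).linearMap_vsub w w₀
  exact ⟨⟨w - w₀, hker⟩, by simpa [signCell_comp, e] using hw⟩

theorem ncard_realizedSignVectors_le [FiniteDimensional ℝ E] (f : Fin k → E →ᵃ[ℝ] ℝ) :
    (realizedSignVectors f).ncard ≤ ∑ i ∈ range (finrank ℝ E + 1), k.choose i := by
  induction k generalizing E with
  | zero =>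
    calc (realizedSignVectors f).ncard ≤ 1 :=
          ncard_le_one_of_subsingleton _
      _ = _ := by simp [sum_range_succ']
  | succ k ih =>
    set A : Bool → Set (Fin k → Bool) := fun b => {s | Fin.cons b s ∈ realizedSignVectors f}
    have hunion : A false ∪ A true ⊆ realizedSignVectors (Fin.tail f) := by
      rintro s (⟨x, hx⟩ | ⟨x, hx⟩) <;> exact ⟨x, (mem_signCell_cons.1 hx).2⟩
    have hinter : (A false ∩ A true).ncard ≤ ∑ i ∈ range (finrank ℝ E), k.choose i := by
      rcases (A false ∩ A true).eq_empty_or_nonempty with h | h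
      · rw [h, ncard_empty]
        exact Nat.zero_le _
      obtain ⟨K, g, hK, hsub⟩ := exists_hyperplane_restriction h
      rw [← hK]
      exact (ncard_le_ncard hsub).trans (ih g)
    calc (realizedSignVectors f).ncard ≤ (A false).ncard + (A true).ncard :=
          ncard_le_ncard_cons_add _
      _ = (A false ∪ A true).ncard + (A false ∩ A true).ncard :=
          (ncard_union_add_ncard_inter _ _).symm
      _ ≤ ∑ i ∈ range (finrank ℝ E + 1), k.choose i + ∑ i ∈ range (finrank ℝ E), k.choose i :=
          add_le_add ((ncard_le_ncard hunion).trans (ih _)) hinter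
      _ = _ := (Nat.sum_range_choose_succ_eq k _).symm

theorem card_connectedComponents_le_ncard_realizedSignVectors [TopologicalSpace E]
    [IsTopologicalAddGroup E] [ContinuousSMul ℝ E] (f : Fin k → E →ᵃ[ℝ] ℝ) :
    Nat.card (ConnectedComponents {x | ∀ i, f i x ≠ 0}) ≤ (realizedSignVectors f).ncard := by
  let sv : {x | ∀ i, f i x ≠ 0} → Fin k → Bool := fun x => signVector f x
  have hfactor : (ConnectedComponents.mk : {x | ∀ i, f i x ≠ 0} → _).FactorsThrough sv := by
    intro x y hxy
    exact ConnectedComponents.mk_eq_mk_of_isPreconnected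
      (convex_signCell f (sv x)).isPreconnected (signCell_subset f _)
      (mem_signCell_signVector x.2) (hxy ▸ mem_signCell_signVector y.2)
  calc _ ≤ Nat.card (range sv) :=
        Nat.card_le_card_range_of_factorsThrough ConnectedComponents.surjective_coe sv hfactor
    _ = (range sv).ncard := Nat.card_coe_set_eq _
    _ ≤ _ := ncard_le_ncard <| range_subset_iff.2 fun x =>
          show sv x ∈ realizedSignVectors f from ⟨x, mem_signCell_signVector x.2⟩

theorem card_connectedComponents_le_sum_choose [TopologicalSpace E] [IsTopologicalAddGroup E]
    [ContinuousSMul ℝ E] [FiniteDimensional ℝ E] (f : Fin k → E →ᵃ[ℝ] ℝ) :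
    Nat.card (ConnectedComponents {x | ∀ i, f i x ≠ 0}) ≤
      ∑ i ∈ range (finrank ℝ E + 1), k.choose i :=
  (card_connectedComponents_le_ncard_realizedSignVectors f).trans
    (ncard_realizedSignVectors_le f)

end HyperplaneArrangement

theorem regions_of_hyperplane_arrangement_le_general (m k : ℕ)
    (α : Fin k → (Fin m → ℝ)) (β : Fin k → ℝ) :
    Nat.card (ConnectedComponents
        {x : Fin m → ℝ | ∀ i : Fin k, ∑ j, α i j * x j ≠ β i}) ≤
      ∑ i ∈ Finset.range (m + 1), Nat.choose k i := by
  let f : Fin k → (Fin m → ℝ) →ᵃ[ℝ] ℝ := fun i =>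
    (dotProductEquiv ℝ (Fin m) (α i)).toAffineMap - AffineMap.const ℝ _ (β i)
  have hregion : {x : Fin m → ℝ | ∀ i : Fin k, ∑ j, α i j * x j ≠ β i} =
      {x | ∀ i, f i x ≠ 0} := by
    ext x
    simp [f, sub_ne_zero, dotProduct]
  rw [hregion]
  simpa using HyperplaneArrangement.card_connectedComponents_le_sum_choose f

/-- **Upper bound on the number of regions of a hyperplane arrangement.**
Given `k` affine hyperplanes `{x ∈ ℝ^m : α i ⬝ x = β i}` (with each normal `α i` nonzero),
the number of connected components of the complement of their union is at most
`∑_{i=0}^{m} C(k, i)`. -/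
theorem regions_of_hyperplane_arrangement_le (m k : ℕ)
    (α : Fin k → (Fin m → ℝ)) (β : Fin k → ℝ) (hα : ∀ i, α i ≠ 0) :
    Nat.card (ConnectedComponents
        {x : Fin m → ℝ | ∀ i : Fin k, ∑ j, α i j * x j ≠ β i}) ≤
      ∑ i ∈ Finset.range (m + 1), Nat.choose k i :=
  regions_of_hyperplane_arrangement_le_general m k α β
end

section
/- Let F : ℝ^m → ℝ^k be a hard-tanh network with n hidden layers of width k. Then the number of distinct activation patterns realized by F as the input ranges over all of ℝ^m is at most (∑_{i=0}^{m} C(2k,i))^n; in particular it is O((2k)^{mn}), uniformly over all choices of the weights and biases. -/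
/-!
Fix the activation pattern `p` of the first `d` layers. On the inputs realizing `p` every
hard-tanh unit of those layers is known to act as the constant `±1` or as the identity, so the
preactivations `h` of layer `d` are an affine function of the input there, and the pattern of
layer `d` is read off from the signs of the `2k` affine functions `h_i + 1` and `1 - h_i`. By the
hyperplane-arrangement count, `N` affine functions on a space of dimension `m` realize at most
`∑_{i ≤ m} C(N, i)` sign patterns: cutting by one more function `h` only doubles the patterns
realized on both sides of `{h = 0}`, and these are realized on that hyperplane, of dimension
`m - 1`. Hence each layer multiplies the number of patterns by at most `∑_{i ≤ m} C(2k, i)`.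
-/

/-- The hard-tanh nonlinearity `φ(u) = max (−1) (min 1 u)`. -/
noncomputable def hardTanh (u : ℝ) : ℝ := max (-1) (min 1 u)

/-- Preactivations of a hard-tanh network: `h^{(0)} = W^{(0)} x + b^{(0)}`, and
`h^{(d+1)} = W^{(d+1)} φ(h^{(d)}) + b^{(d+1)}`, with `φ` the hard-tanh applied
coordinatewise. -/
noncomputable def htPreact {m k : ℕ} (W0 : Matrix (Fin k) (Fin m) ℝ)
    (W : ℕ → Matrix (Fin k) (Fin k) ℝ) (b : ℕ → Fin k → ℝ) (x : Fin m → ℝ) :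
    ℕ → Fin k → ℝ
  | 0 => W0.mulVec x + b 0
  | d + 1 => (W (d + 1)).mulVec (fun i => hardTanh (htPreact W0 W b x d i)) + b (d + 1)

/-- The activation pattern of a hard-tanh network at input `x`: for every hidden neuron it
records in `{-1, 0, 1}` whether its preactivation satisfies `h ≤ −1`, `−1 < h < 1`, or
`h ≥ 1`. -/
noncomputable def htActivationPattern (m k n : ℕ) (W0 : Matrix (Fin k) (Fin m) ℝ)
    (W : ℕ → Matrix (Fin k) (Fin k) ℝ) (b : ℕ → Fin k → ℝ) (x : Fin m → ℝ) :
    Fin n → Fin k → ℤ :=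
  fun d i =>
    if htPreact W0 W b x d i ≤ -1 then -1
    else if 1 ≤ htPreact W0 W b x d i then 1
    else 0

def signBound (N m : ℕ) : ℕ := ∑ i ∈ Finset.range (m + 1), N.choose i

lemma signBound_mono_left (N m : ℕ) : signBound N m ≤ signBound (N + 1) m :=
  Finset.sum_le_sum fun i _ => Nat.choose_le_choose i N.le_succ

lemma signBound_succ_succ (N m : ℕ) :
    signBound (N + 1) (m + 1) = signBound N (m + 1) + signBound N m := by
  simp only [signBound]
  rw [Finset.sum_range_succ', Finset.sum_range_succ' _ (m + 1)]
  simp only [Nat.choose_succ_succ, Nat.choose_zero_right, Finset.sum_add_distrib]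
  ring

namespace Set

theorem ncard_le_ncard_image_mul {α β : Type*} {s : Set α} (f : α → β) {B : ℕ}
    (hB : ∀ y ∈ f '' s, (s ∩ f ⁻¹' {y}).ncard ≤ B) : s.ncard ≤ (f '' s).ncard * B := by
  classical
  rcases s.finite_or_infinite with hs | hs
  · obtain ⟨t, rfl⟩ := hs.exists_finset_coe
    rw [← Finset.coe_image, ncard_coe_finset, ncard_coe_finset, mul_comm]
    refine Finset.card_le_mul_card_image t B fun y hy => ?_
    rw [← ncard_coe_finset, Finset.coe_filter]
    exact hB y (by simpa using hy)
  · simp [hs.ncard]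

theorem ncard_range_le_ncard_range_init_mul {α β : Type*} {n : ℕ} (P : α → Fin (n + 1) → β)
    {B : ℕ} (hB : ∀ p, ((fun x => P x (Fin.last n)) '' {x | Fin.init (P x) = p}).ncard ≤ B) :
    (range P).ncard ≤ (range fun x => Fin.init (P x)).ncard * B := by
  have hfiber : ∀ p, range P ∩ Fin.init ⁻¹' {p} =
      Fin.snoc p '' ((fun x => P x (Fin.last n)) '' {x | Fin.init (P x) = p}) := by
    intro p
    ext q
    constructor
    · rintro ⟨⟨x, rfl⟩, hx⟩
      exact ⟨P x (Fin.last n), ⟨x, hx, rfl⟩, by rw [← mem_singleton_iff.1 hx, Fin.snoc_init_self]⟩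
    · rintro ⟨_, ⟨x, hx, rfl⟩, rfl⟩
      exact ⟨⟨x, by rw [← hx, Fin.snoc_init_self]⟩, by simp⟩
  rw [range_comp' Fin.init P]
  refine ncard_le_ncard_image_mul Fin.init fun p _ => ?_
  rw [hfiber]
  exact (ncard_image_of_injective _ (Fin.snoc_right_injective (α := fun _ => β) p)).trans_le (hB p)

theorem ncard_le_ncard_add_ncard_of_snoc {N : ℕ} {S : Set (Fin (N + 1) → Bool)}
    {T U : Set (Fin N → Bool)} (hT : ∀ t b, Fin.snoc t b ∈ S → t ∈ T)
    (hU : ∀ t, Fin.snoc t true ∈ S → Fin.snoc t false ∈ S → t ∈ U) :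
    S.ncard ≤ T.ncard + U.ncard := by
  classical
  have hS : S ⊆ (fun t => Fin.snoc t (decide (Fin.snoc t true ∈ S))) '' T ∪
      (fun t => Fin.snoc t false) '' U := by
    intro p hp
    rw [← Fin.snoc_init_self p] at hp ⊢
    cases hlast : p (Fin.last N)
    · rw [hlast] at hp
      by_cases htrue : Fin.snoc (Fin.init p) true ∈ S
      · exact Or.inr ⟨_, hU _ htrue hp, rfl⟩
      · exact Or.inl ⟨_, hT _ _ hp, by simp [htrue]⟩
    · rw [hlast] at hp
      exact Or.inl ⟨_, hT _ _ hp, by simp [hp]⟩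
  calc S.ncard ≤ _ := ncard_le_ncard hS
    _ ≤ _ := ncard_union_le _ _
    _ ≤ T.ncard + U.ncard := add_le_add ncard_image_le ncard_image_le

end Set

section SignPatterns

variable {𝕜 E : Type*} [Field 𝕜] [AddCommGroup E] [Module 𝕜 E]

lemma exists_affineMap_ker_covers_zeroLevel (h : E →ᵃ[𝕜] 𝕜) (hh : h.linear ≠ 0) :
    ∃ ι : LinearMap.ker h.linear →ᵃ[𝕜] E, ∀ w, h w = 0 → w ∈ Set.range ι := by
  obtain ⟨x₀, hx₀⟩ : ∃ x₀, h x₀ = 0 := h.linear_surjective_iff.1 (LinearMap.surjective hh) 0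
  refine ⟨(AffineEquiv.vaddConst 𝕜 x₀).toAffineMap.comp
    (LinearMap.ker h.linear).subtype.toAffineMap, fun w hw => ⟨⟨w -ᵥ x₀, ?_⟩, by simp⟩⟩
  rw [LinearMap.mem_ker, AffineMap.linearMap_vsub, hw, hx₀, vsub_self]

variable [LinearOrder 𝕜]

def nonposPattern {N : ℕ} (g : Fin N → E →ᵃ[𝕜] 𝕜) (x : E) : Fin N → Bool :=
  fun j => decide (g j x ≤ 0)

lemma nonposPattern_snoc {N : ℕ} (g : Fin N → E →ᵃ[𝕜] 𝕜) (h : E →ᵃ[𝕜] 𝕜) (x : E) :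
    nonposPattern (Fin.snoc g h) x = Fin.snoc (nonposPattern g x) (decide (h x ≤ 0)) :=
  Fin.comp_snoc (fun f : E →ᵃ[𝕜] 𝕜 => decide (f x ≤ 0)) g h

lemma ncard_range_nonposPattern_snoc_le {N : ℕ} (g : Fin N → E →ᵃ[𝕜] 𝕜) (h : E →ᵃ[𝕜] 𝕜) :
    (Set.range (nonposPattern (Fin.snoc g h))).ncard ≤ (Set.range (nonposPattern g)).ncard +
      {t | ∃ x y, nonposPattern g x = t ∧ nonposPattern g y = t ∧ h x ≤ 0 ∧ 0 < h y}.ncard := by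
  refine Set.ncard_le_ncard_add_ncard_of_snoc ?_ ?_
  · rintro t b ⟨x, hx⟩
    rw [nonposPattern_snoc, Fin.snoc_inj] at hx
    exact ⟨x, hx.1⟩
  · rintro t ⟨x, hx⟩ ⟨y, hy⟩
    rw [nonposPattern_snoc, Fin.snoc_inj, decide_eq_true_iff] at hx
    rw [nonposPattern_snoc, Fin.snoc_inj, decide_eq_false_iff_not, not_le] at hy
    exact ⟨x, y, hx.1, hy.1, hx.2, hy.2⟩

variable [IsStrictOrderedRing 𝕜]

lemma exists_eq_zero_nonposPattern_eq {N : ℕ} (g : Fin N → E →ᵃ[𝕜] 𝕜) (h : E →ᵃ[𝕜] 𝕜)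
    {x y : E} (hx : h x ≤ 0) (hy : 0 < h y) (hxy : nonposPattern g x = nonposPattern g y) :
    ∃ w, h w = 0 ∧ nonposPattern g w = nonposPattern g x := by
  set t := h x / (h x - h y)
  have hd : h x - h y < 0 := by linarith
  have ht0 : 0 ≤ t := div_nonneg_of_nonpos hx hd.le
  have ht1 : t ≤ 1 := (div_le_one_of_neg hd).2 (by linarith)
  refine ⟨AffineMap.lineMap x y t, ?_, funext fun j => ?_⟩
  · have ht : t * (h x - h y) = h x := div_mul_cancel₀ _ hd.ne
    rw [AffineMap.apply_lineMap, AffineMap.lineMap_apply_ring']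
    linear_combination -ht
  · have hj := congrFun hxy j
    simp only [nonposPattern, decide_eq_decide] at hj ⊢
    rw [AffineMap.apply_lineMap, AffineMap.lineMap_apply_ring']
    constructor
    · intro hw
      by_contra! hpos
      have hpos' : 0 < g j y := lt_of_not_ge (mt hj.2 hpos.not_ge)
      nlinarith [mul_nonneg ht0 hpos'.le, mul_nonneg (sub_nonneg.2 ht1) hpos.le]
    · intro hneg
      nlinarith [hj.1 hneg]

open Module in
theorem ncard_range_nonposPattern_le [FiniteDimensional 𝕜 E] {N m : ℕ}
    (g : Fin N → E →ᵃ[𝕜] 𝕜) (hm : finrank 𝕜 E ≤ m) :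
    (Set.range (nonposPattern g)).ncard ≤ signBound N m := by
  induction N generalizing E m with
  | zero =>
    exact (Set.ncard_le_one_of_subsingleton _).trans (by simp [signBound, Finset.sum_range_succ'])
  | succ N ih =>
    rw [← Fin.snoc_init_self g]
    set h := g (Fin.last N)
    set g' := Fin.init g
    refine (ncard_range_nonposPattern_snoc_le g' h).trans ?_
    by_cases hlin : h.linear = 0
    · have hempty : {t | ∃ x y, nonposPattern g' x = t ∧ nonposPattern g' y = t ∧
          h x ≤ 0 ∧ 0 < h y} = ∅ := by
        refine Set.eq_empty_of_forall_notMem ?_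
        rintro t ⟨x, y, -, -, hx, hy⟩
        have hconst : h y = h x :=
          sub_eq_zero.1 (by simpa [hlin] using (AffineMap.linearMap_vsub h y x).symm)
        linarith
      rw [hempty, Set.ncard_empty, add_zero]
      exact (ih g' hm).trans (signBound_mono_left N m)
    · obtain ⟨ι, hι⟩ := exists_affineMap_ker_covers_zeroLevel h hlin
      obtain ⟨m', rfl, hm'⟩ : ∃ m', m = m' + 1 ∧ finrank 𝕜 (LinearMap.ker h.linear) ≤ m' := by
        have := Module.Dual.finrank_ker_add_one_of_ne_zero hlin
        exact ⟨m - 1, by omega, by omega⟩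
      have hsub : {t | ∃ x y, nonposPattern g' x = t ∧ nonposPattern g' y = t ∧
          h x ≤ 0 ∧ 0 < h y} ⊆ Set.range (nonposPattern fun j => (g' j).comp ι) := by
        rintro t ⟨x, y, hxt, hyt, hx, hy⟩
        obtain ⟨w, hw, hwx⟩ := exists_eq_zero_nonposPattern_eq g' h hx hy (hxt.trans hyt.symm)
        obtain ⟨u, rfl⟩ := hι w hw
        exact ⟨u, hwx.trans hxt⟩
      calc _ ≤ signBound N (m' + 1) + signBound N m' :=
            add_le_add (ih g' hm) ((Set.ncard_le_ncard hsub).trans (ih _ hm'))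
        _ = signBound (N + 1) (m' + 1) := (signBound_succ_succ N m').symm

end SignPatterns

noncomputable def htSign (u : ℝ) : ℤ := if u ≤ -1 then -1 else if 1 ≤ u then 1 else 0

lemma htSign_eq_ite_nonpos (u : ℝ) :
    htSign u = if u + 1 ≤ 0 then -1 else if 1 - u ≤ 0 then 1 else 0 := by
  simp only [htSign, ← le_neg_iff_add_nonpos_right, sub_nonpos]

lemma hardTanh_eq_ite_htSign (u : ℝ) : hardTanh u = if htSign u = 0 then u else htSign u := by
  unfold hardTanh htSign
  split_ifs <;> grind

/-- How the hard-tanh layer acts on preactivations whose signs are `s`. -/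
noncomputable def clampMap {k : ℕ} (s : Fin k → ℤ) : (Fin k → ℝ) →ᵃ[ℝ] (Fin k → ℝ) :=
  AffineMap.pi fun i => if s i = 0 then AffineMap.proj i else AffineMap.const ℝ _ (s i : ℝ)

lemma hardTanh_comp_eq_clampMap {k : ℕ} (y : Fin k → ℝ) :
    (fun i => hardTanh (y i)) = clampMap (fun i => htSign (y i)) y := by
  funext i
  rw [hardTanh_eq_ite_htSign]
  simp only [clampMap, AffineMap.pi_apply]
  split_ifs <;> rfl

open Module in
lemma ncard_image_htSign_affineMap_le {E : Type*} [AddCommGroup E] [Module ℝ E]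
    [FiniteDimensional ℝ E] {k m : ℕ} (A : E →ᵃ[ℝ] (Fin k → ℝ)) (hm : finrank ℝ E ≤ m)
    (S : Set E) : ((fun x i => htSign (A x i)) '' S).ncard ≤ signBound (2 * k) m := by
  let g : Fin (k + k) → E →ᵃ[ℝ] ℝ := Fin.append
    (fun i => (AffineMap.proj i).comp A + AffineMap.const ℝ E 1)
    (fun i => AffineMap.const ℝ E 1 - (AffineMap.proj i).comp A)
  let decode : (Fin (k + k) → Bool) → Fin k → ℤ := fun q i =>
    if q (Fin.castAdd k i) then -1 else if q (Fin.natAdd k i) then 1 else 0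
  have hsub : (fun x i => htSign (A x i)) '' S ⊆ decode '' Set.range (nonposPattern g) := by
    rintro _ ⟨x, -, rfl⟩
    refine ⟨nonposPattern g x, ⟨x, rfl⟩, funext fun i => ?_⟩
    simp only [decode, g, nonposPattern, Fin.append_left, Fin.append_right, decide_eq_true_eq]
    simp [htSign_eq_ite_nonpos, add_comm]
  calc _ ≤ _ := Set.ncard_le_ncard hsub
    _ ≤ (Set.range (nonposPattern g)).ncard := Set.ncard_image_le
    _ ≤ signBound (2 * k) m := by rw [two_mul]; exact ncard_range_nonposPattern_le g hm

section HardTanhNetwork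

variable {m k : ℕ} (W0 : Matrix (Fin k) (Fin m) ℝ) (W : ℕ → Matrix (Fin k) (Fin k) ℝ)
  (b : ℕ → Fin k → ℝ)

lemma exists_affineMap_htPreact_eq (n : ℕ) (p : Fin n → Fin k → ℤ) :
    ∃ A : (Fin m → ℝ) →ᵃ[ℝ] (Fin k → ℝ), ∀ x,
      htActivationPattern m k n W0 W b x = p → htPreact W0 W b x n = A x := by
  induction n with
  | zero => exact ⟨W0.mulVecLin.toAffineMap + AffineMap.const ℝ _ (b 0), fun x _ => rfl⟩
  | succ n ih =>
    obtain ⟨A, hA⟩ := ih (Fin.init p)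
    refine ⟨((W (n + 1)).mulVecLin.toAffineMap + AffineMap.const ℝ _ (b (n + 1))).comp
      ((clampMap (p (Fin.last n))).comp A), fun x hx => ?_⟩
    have hlast : (fun i => htSign (htPreact W0 W b x n i)) = p (Fin.last n) := by
      rw [← hx]; rfl
    have hinit : htActivationPattern m k n W0 W b x = Fin.init p := by
      rw [← hx]; rfl
    change (W (n + 1)).mulVec (fun i => hardTanh (htPreact W0 W b x n i)) + b (n + 1) = _
    rw [hardTanh_comp_eq_clampMap, hlast, hA x hinit]
    rfl

lemma ncard_htActivationPattern_last_image_le (n : ℕ) (p : Fin n → Fin k → ℤ) :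
    ((fun x => htActivationPattern m k (n + 1) W0 W b x (Fin.last n)) ''
      {x | Fin.init (htActivationPattern m k (n + 1) W0 W b x) = p}).ncard ≤
      signBound (2 * k) m := by
  obtain ⟨A, hA⟩ := exists_affineMap_htPreact_eq W0 W b n p
  have heq : Set.EqOn (fun x => htActivationPattern m k (n + 1) W0 W b x (Fin.last n))
      (fun x i => htSign (A x i)) {x | Fin.init (htActivationPattern m k (n + 1) W0 W b x) = p} :=
    fun x hx => funext fun i => congrArg htSign (congrFun (hA x hx) i)
  rw [heq.image_eq]
  exact ncard_image_htSign_affineMap_le A (Module.finrank_fin_fun ℝ).le _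

end HardTanhNetwork

/-- **(Tight) upper bound on the number of activation patterns of a hard-tanh network.**
For a fully connected hard-tanh network with `n` hidden layers of width `k` and inputs in
`ℝ^m`, the number of distinct activation patterns realized as the input ranges over all of
`ℝ^m` is at most `(∑_{i=0}^m C(2k,i))^n = O((2k)^{mn})`, for every choice of weights and
biases. -/
theorem card_htActivationPatterns_le (m k n : ℕ)
    (W0 : Matrix (Fin k) (Fin m) ℝ) (W : ℕ → Matrix (Fin k) (Fin k) ℝ)
    (b : ℕ → Fin k → ℝ) :
    Nat.card (Set.range (htActivationPattern m k n W0 W b)) ≤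
      (∑ i ∈ Finset.range (m + 1), Nat.choose (2 * k) i) ^ n := by
  rw [Nat.card_coe_set_eq]
  induction n with
  | zero => exact Set.ncard_le_one_of_subsingleton _
  | succ n ih =>
    calc _ ≤ (Set.range (htActivationPattern m k n W0 W b)).ncard * signBound (2 * k) m :=
          Set.ncard_range_le_ncard_range_init_mul _ (ncard_htActivationPattern_last_image_le W0 W b n)
      _ ≤ signBound (2 * k) m ^ n * signBound (2 * k) m := Nat.mul_le_mul_right _ ih
      _ = _ := (pow_succ _ n).symm
end

section
/- For every real s with 0 < s < 1 and every real x > 0, one has (x + s/2)^{1−s} ≤ Γ(x+1)/Γ(x+s) ≤ (x − 1/2 + (s + 1/4)^{1/2})^{1−s}, where Γ is the Gamma function. -/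
/-!
Kershaw's argument. For `β ≥ 0` let `G(y) = log (Γ(y+1)/Γ(y+s)) - (1-s) log (y+β)` (`logDefect`).
Wendel's inequality `y^(1-s) ≤ Γ(y+1)/Γ(y+s) ≤ (y+s)^(1-s)`, a consequence of the log-convexity
of `Γ`, gives `G(y) → 0` as `y → ∞`, hence also `Δ(y) = G(y+1) - G(y) → 0` (`increment`).
By the functional equation `Δ` is an explicit combination of logarithms, with derivative
`(1-s) (1/((y+β)(y+β+1)) - 1/((y+1)(y+s)))`.
For `β = s/2` this derivative is nonnegative, so `Δ ≤ 0`, `G` decreases to `0` along `x + ℕ` and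
`G(x) ≥ 0`: the lower bound. For `β (β+1) = s`, i.e. `β = √(s+1/4) - 1/2`, all signs flip and
give the upper bound.
-/

open Filter Real Topology Set

theorem le_of_tendsto_of_hasDerivAt_nonneg {f f' : ℝ → ℝ} {a l x : ℝ}
    (hf : ∀ y, a < y → HasDerivAt f (f' y) y) (hf' : ∀ y, a < y → 0 ≤ f' y)
    (hlim : Tendsto f atTop (𝓝 l)) (hx : a < x) : f x ≤ l := by
  have hmono : MonotoneOn f (Ioi a) :=
    monotoneOn_of_hasDerivWithinAt_nonneg (convex_Ioi a)
      (fun y hy => (hf y hy).continuousAt.continuousWithinAt)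
      (fun y hy => by rw [interior_Ioi] at hy ⊢; exact (hf y hy).hasDerivWithinAt)
      (fun y hy => hf' y (by rwa [interior_Ioi] at hy))
  refine ge_of_tendsto hlim ?_
  filter_upwards [eventually_ge_atTop x] with y hy using hmono hx (hx.trans_le hy) hy

namespace Real

theorem Gamma_add_le_rpow_mul_Gamma {y t : ℝ} (hy : 0 < y) (ht₀ : 0 < t) (ht₁ : t < 1) :
    Gamma (y + t) ≤ y ^ t * Gamma y := by
  have hΓ := Gamma_pos_of_pos hy
  calc Gamma (y + t) = Gamma (t * (y + 1) + (1 - t) * y) := by ring_nf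
    _ ≤ Gamma (y + 1) ^ t * Gamma y ^ (1 - t) :=
      Gamma_mul_add_mul_le_rpow_Gamma_mul_rpow_Gamma (by linarith) hy ht₀ (sub_pos.2 ht₁)
        (add_sub_cancel t 1)
    _ = y ^ t * Gamma y := by
      rw [Gamma_add_one hy.ne', mul_rpow hy.le hΓ.le, mul_assoc, ← rpow_add hΓ, add_sub_cancel,
        rpow_one]

theorem rpow_le_Gamma_add_one_div_Gamma_add {y s : ℝ} (hy : 0 < y) (hs₀ : 0 < s) (hs₁ : s < 1) :
    y ^ (1 - s) ≤ Gamma (y + 1) / Gamma (y + s) := by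
  rw [le_div_iff₀ (Gamma_pos_of_pos (by linarith)), Gamma_add_one hy.ne']
  calc y ^ (1 - s) * Gamma (y + s) ≤ y ^ (1 - s) * (y ^ s * Gamma y) := by
        gcongr; exact Gamma_add_le_rpow_mul_Gamma hy hs₀ hs₁
    _ = y * Gamma y := by rw [← mul_assoc, ← rpow_add hy, sub_add_cancel, rpow_one]

theorem Gamma_add_one_div_Gamma_add_le_rpow {y s : ℝ} (hy : 0 < y) (hs₀ : 0 < s) (hs₁ : s < 1) :
    Gamma (y + 1) / Gamma (y + s) ≤ (y + s) ^ (1 - s) := by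
  have hys : 0 < y + s := by linarith
  rw [div_le_iff₀ (Gamma_pos_of_pos hys)]
  calc Gamma (y + 1) = Gamma (y + s + (1 - s)) := by ring_nf
    _ ≤ (y + s) ^ (1 - s) * Gamma (y + s) :=
      Gamma_add_le_rpow_mul_Gamma hys (sub_pos.2 hs₁) (by linarith)

theorem tendsto_log_add_sub_log_add (a b : ℝ) :
    Tendsto (fun y => log (y + a) - log (y + b)) atTop (𝓝 0) := by
  simpa using (tendsto_log_comp_add_sub_log a).sub (tendsto_log_comp_add_sub_log b)

end Real

namespace Kershaw

variable {s β : ℝ}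

noncomputable def logDefect (s β y : ℝ) : ℝ :=
  log (Gamma (y + 1) / Gamma (y + s)) - (1 - s) * log (y + β)

noncomputable def increment (s β y : ℝ) : ℝ :=
  log (y + 1) - log (y + s) - (1 - s) * (log (y + β + 1) - log (y + β))

theorem logDefect_add_one_sub {y : ℝ} (hy : 0 < y) (hs : 0 < s) :
    logDefect s β (y + 1) - logDefect s β y = increment s β y := by
  have hys : 0 < y + s := by linarith
  have hΓ : Gamma (y + 1 + 1) / Gamma (y + 1 + s) =
      (y + 1) / (y + s) * (Gamma (y + 1) / Gamma (y + s)) := by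
    rw [Gamma_add_one (by linarith), add_right_comm, Gamma_add_one hys.ne']
    field_simp
  have hΓpos : 0 < Gamma (y + 1) / Gamma (y + s) :=
    div_pos (Gamma_pos_of_pos (by linarith)) (Gamma_pos_of_pos hys)
  rw [logDefect, logDefect, increment, hΓ, log_mul (by positivity) hΓpos.ne',
    log_div (by linarith) hys.ne', add_right_comm y 1 β]
  ring

theorem tendsto_logDefect (hs₀ : 0 < s) (hs₁ : s < 1) (β : ℝ) :
    Tendsto (logDefect s β) atTop (𝓝 0) := by
  have lim (a : ℝ) : Tendsto (fun y => (1 - s) * (log (y + a) - log (y + β))) atTop (𝓝 0) := by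
    simpa using (tendsto_log_add_sub_log_add a β).const_mul (1 - s)
  refine tendsto_of_tendsto_of_tendsto_of_le_of_le' (lim 0) (lim s) ?_ ?_ <;>
    filter_upwards [eventually_gt_atTop 0] with y hy <;>
    rw [logDefect, mul_sub, sub_le_sub_iff_right, ← log_rpow (by linarith)]
  · rw [add_zero]
    exact log_le_log (by positivity) (rpow_le_Gamma_add_one_div_Gamma_add hy hs₀ hs₁)
  · exact log_le_log (div_pos (Gamma_pos_of_pos (by linarith)) (Gamma_pos_of_pos (by linarith)))
      (Gamma_add_one_div_Gamma_add_le_rpow hy hs₀ hs₁)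

theorem tendsto_increment (hs₀ : 0 < s) (hs₁ : s < 1) (β : ℝ) :
    Tendsto (increment s β) atTop (𝓝 0) := by
  have h := ((tendsto_logDefect hs₀ hs₁ β).comp (tendsto_atTop_add_const_right _ 1 tendsto_id)).sub
    (tendsto_logDefect hs₀ hs₁ β)
  rw [sub_zero] at h
  refine h.congr' ?_
  filter_upwards [eventually_gt_atTop 0] with y hy using logDefect_add_one_sub hy hs₀

theorem hasDerivAt_increment {y : ℝ} (hy : 0 < y) (hs : 0 ≤ s) (hβ : 0 ≤ β) :
    HasDerivAt (increment s β)
      ((1 - s) * (1 / ((y + β) * (y + β + 1)) - 1 / ((y + 1) * (y + s)))) y := by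
  have hlog (a : ℝ) (ha : 0 ≤ a) : HasDerivAt (fun y => log (y + a)) (1 / (y + a)) y :=
    ((hasDerivAt_id' y).add_const a).log (by positivity)
  have h := ((hlog 1 zero_le_one).sub (hlog s hs)).sub
    (((hlog (β + 1) (by positivity)).sub (hlog β hβ)).const_mul (1 - s))
  simp only [← add_assoc] at h
  refine h.congr_deriv ?_
  have : y + s ≠ 0 := by positivity
  have : y + β ≠ 0 := by positivity
  have : y + β + 1 ≠ 0 := by positivity
  field_simp
  ring

theorem increment_nonpos (hs₀ : 0 < s) (hs₁ : s < 1) (hβ : 0 ≤ β)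
    (hquad : ∀ y, 0 < y → (y + β) * (y + β + 1) ≤ (y + 1) * (y + s)) {x : ℝ} (hx : 0 < x) :
    increment s β x ≤ 0 := by
  refine le_of_tendsto_of_hasDerivAt_nonneg (fun y hy => hasDerivAt_increment hy hs₀.le hβ)
    (fun y hy => ?_) (tendsto_increment hs₀ hs₁ β) hx
  have hpos : 0 < (y + β) * (y + β + 1) := by positivity
  have := one_div_le_one_div_of_le hpos (hquad y hy)
  exact mul_nonneg (by linarith) (by linarith)

theorem increment_nonneg (hs₀ : 0 < s) (hs₁ : s < 1) (hβ : 0 ≤ β)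
    (hquad : ∀ y, 0 < y → (y + 1) * (y + s) ≤ (y + β) * (y + β + 1)) {x : ℝ} (hx : 0 < x) :
    0 ≤ increment s β x := by
  refine neg_nonpos.1 (le_of_tendsto_of_hasDerivAt_nonneg (f := -increment s β)
    (fun y hy => (hasDerivAt_increment hy hs₀.le hβ).neg) (fun y hy => ?_)
    (neg_zero (G := ℝ) ▸ (tendsto_increment hs₀ hs₁ β).neg) hx)
  have hpos : 0 < (y + 1) * (y + s) := by positivity
  have := one_div_le_one_div_of_le hpos (hquad y hy)
  exact neg_nonneg.2 (mul_nonpos_of_nonneg_of_nonpos (by linarith) (by linarith))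

theorem tendsto_logDefect_add_nat (hs₀ : 0 < s) (hs₁ : s < 1) (β x : ℝ) :
    Tendsto (fun n : ℕ => logDefect s β (x + n)) atTop (𝓝 0) :=
  (tendsto_logDefect hs₀ hs₁ β).comp
    (tendsto_atTop_add_const_left _ x tendsto_natCast_atTop_atTop)

theorem logDefect_add_nat_succ {x : ℝ} (hx : 0 < x) (hs : 0 < s) (n : ℕ) :
    logDefect s β (x + (n + 1 : ℕ)) = logDefect s β (x + n) + increment s β (x + n) := by
  rw [← logDefect_add_one_sub (by positivity) hs, Nat.cast_succ, ← add_assoc]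
  ring

theorem rpow_le_Gamma_ratio (hs₀ : 0 < s) (hs₁ : s < 1) (hβ : 0 ≤ β)
    (hquad : ∀ y, 0 < y → (y + β) * (y + β + 1) ≤ (y + 1) * (y + s)) {x : ℝ} (hx : 0 < x) :
    (x + β) ^ (1 - s) ≤ Gamma (x + 1) / Gamma (x + s) := by
  have hanti : Antitone fun n : ℕ => logDefect s β (x + n) := by
    refine antitone_nat_of_succ_le fun n => ?_
    rw [logDefect_add_nat_succ hx hs₀]
    linarith [increment_nonpos hs₀ hs₁ hβ hquad (by positivity : 0 < x + n)]
  have h := hanti.le_of_tendsto (tendsto_logDefect_add_nat hs₀ hs₁ β x) 0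
  rw [Nat.cast_zero, add_zero, logDefect, sub_nonneg, ← log_rpow (by linarith)] at h
  exact (log_le_log_iff (by positivity)
    (div_pos (Gamma_pos_of_pos (by linarith)) (Gamma_pos_of_pos (by linarith)))).1 h

theorem Gamma_ratio_le_rpow (hs₀ : 0 < s) (hs₁ : s < 1) (hβ : 0 ≤ β)
    (hquad : ∀ y, 0 < y → (y + 1) * (y + s) ≤ (y + β) * (y + β + 1)) {x : ℝ} (hx : 0 < x) :
    Gamma (x + 1) / Gamma (x + s) ≤ (x + β) ^ (1 - s) := by
  have hmono : Monotone fun n : ℕ => logDefect s β (x + n) := by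
    refine monotone_nat_of_le_succ fun n => ?_
    rw [logDefect_add_nat_succ hx hs₀]
    linarith [increment_nonneg hs₀ hs₁ hβ hquad (by positivity : 0 < x + n)]
  have h := hmono.ge_of_tendsto (tendsto_logDefect_add_nat hs₀ hs₁ β x) 0
  rw [Nat.cast_zero, add_zero, logDefect, sub_nonpos, ← log_rpow (by linarith)] at h
  exact (log_le_log_iff
    (div_pos (Gamma_pos_of_pos (by linarith)) (Gamma_pos_of_pos (by linarith)))
    (by positivity)).1 h

end Kershaw

/-- **An extension of Gautschi's inequality.**
For `0 < s < 1` and `x > 0`,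
`(x + s/2)^{1−s} ≤ Γ(x+1)/Γ(x+s) ≤ (x − 1/2 + √(s + 1/4))^{1−s}`. -/
theorem extended_gautschi_inequality (s x : ℝ) (hs0 : 0 < s) (hs1 : s < 1) (hx : 0 < x) :
    (x + s / 2) ^ (1 - s) ≤ Real.Gamma (x + 1) / Real.Gamma (x + s) ∧
    Real.Gamma (x + 1) / Real.Gamma (x + s) ≤
      (x - 1 / 2 + Real.sqrt (s + 1 / 4)) ^ (1 - s) := by
  refine ⟨Kershaw.rpow_le_Gamma_ratio hs0 hs1 (by positivity)
    (fun y _ => by nlinarith) hx, ?_⟩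
  set β := √(s + 1 / 4) - 1 / 2 with hβ_def
  have hβ₀ : 0 ≤ β := by linarith [lt_sqrt_of_sq_lt (by linarith : (1 / 2 : ℝ) ^ 2 < s + 1 / 4)]
  have hβ₁ : β ≤ 1 := by
    linarith [(sqrt_lt' (by norm_num : (0 : ℝ) < 3 / 2)).2 (by linarith : s + 1 / 4 < (3 / 2) ^ 2)]
  have hβs : β * (β + 1) = s := by linear_combination sq_sqrt (by linarith : 0 ≤ s + 1 / 4)
  rw [show x - 1 / 2 + √(s + 1 / 4) = x + β by ring]
  refine Kershaw.Gamma_ratio_le_rpow hs0 hs1 hβ₀ (fun y hy => ?_) hx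
  -- the two sides differ by `β (1 - β) y`, because `β (β + 1) = s`
  nlinarith [mul_nonneg (mul_nonneg hβ₀ (sub_nonneg.2 hβ₁)) hy.le]
end
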